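/- arXiv:1911.08917 — 2 statements merged into one kernel-verified Lean document; each statement's English description precedes it below -/
import Mathlib

section
/- Let λ ∈ ℂ with Im λ ≠ 0, let ω, δ ∈ ℝ, and define φ_n(x) = γ_n·√(|Im λ|/π)·e^{iωx}·(λ−x)^{n+δ}/(conj(λ)−x)^{n+δ+1} for n ∈ ℤ, where |γ_n| = 1 and the complex powers are defined via a continuous branch (noting (λ−x)/(conj(λ)−x) has modulus 1 and is never 1 for x real). Then {φ_n}_{n∈ℤ} is an orthonormal system in L²(ℝ). -/
open Complex MeasureTheory ProbabilityTheory Filter Topology Bornology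
open scoped ComplexConjugate

/-!
Write `w = cayley l`, which is unimodular because `|l - x| = |conj l - x|`, and `ρ` for the
Cauchy density with location `l.re` and scale `|l.im|`. Then
`φ m · conj (φ n) = γ m · conj (γ n) · w^(m-n) · ρ`. For `k ≠ 0`, `w^k ρ` is the derivative of
`(|l.im| / π) · w^k / (k (l - conj l))`, which has the same limit at `±∞` because `w → 1` there,
so its integral vanishes; and `∫ ρ = 1`. In other words, `w` pushes the Cauchy distribution
forward to the uniform distribution on the unit circle.
-/

/-- The paper's `w = e^{iH}`; for `l = I` it is the Cayley transform `x ↦ (x - I) / (x + I)`. -/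
noncomputable def cayley (l : ℂ) (x : ℝ) : ℂ := (l - x) / (conj l - x)

section
variable {l : ℂ}

lemma sub_ofReal_ne_zero (hl : l.im ≠ 0) (x : ℝ) : l - x ≠ 0 := by
  intro h
  exact hl (by simpa using congrArg im h)

lemma conj_sub_ofReal_eq (l : ℂ) (x : ℝ) : conj l - x = conj (l - x) := by
  rw [map_sub, conj_ofReal]

lemma conj_sub_ofReal_ne_zero (hl : l.im ≠ 0) (x : ℝ) : conj l - x ≠ 0 := by
  rw [conj_sub_ofReal_eq]
  exact (map_ne_zero _).2 (sub_ofReal_ne_zero hl x)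

lemma norm_cayley (hl : l.im ≠ 0) (x : ℝ) : ‖cayley l x‖ = 1 := by
  rw [cayley, norm_div, conj_sub_ofReal_eq, norm_conj,
    div_self (norm_ne_zero_iff.2 (sub_ofReal_ne_zero hl x))]

lemma cayley_ne_zero (hl : l.im ≠ 0) (x : ℝ) : cayley l x ≠ 0 :=
  norm_ne_zero_iff.1 (by simp [norm_cayley hl x])

lemma cayley_eq_one_add (hl : l.im ≠ 0) (x : ℝ) :
    cayley l x = 1 + (l - conj l) * (conj l - x)⁻¹ := by
  have := conj_sub_ofReal_ne_zero hl x
  rw [cayley]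
  field_simp
  ring

lemma tendsto_cayley_cobounded (hl : l.im ≠ 0) : Tendsto (cayley l) (cobounded ℝ) (𝓝 1) := by
  have h : Tendsto (fun x : ℝ => (conj l - x)⁻¹) (cobounded ℝ) (𝓝 0) :=
    tendsto_inv₀_cobounded.comp
      ((tendsto_const_sub_cobounded _).comp isometry_ofReal.antilipschitz.tendsto_cobounded)
  have := (h.const_mul (l - conj l)).const_add 1
  rw [mul_zero, add_zero] at this
  exact this.congr fun x => (cayley_eq_one_add hl x).symm

lemma hasDerivAt_cayley (hl : l.im ≠ 0) (x : ℝ) :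
    HasDerivAt (cayley l) ((l - conj l) / (conj l - x) ^ 2) x := by
  have hx : HasDerivAt (fun y : ℝ => (y : ℂ)) 1 x := (hasDerivAt_id x).ofReal_comp
  refine ((hx.const_sub l).div (hx.const_sub (conj l)) (conj_sub_ofReal_ne_zero hl x)).congr_deriv
    (by ring)

lemma continuous_cayley (hl : l.im ≠ 0) : Continuous (cayley l) :=
  continuous_iff_continuousAt.2 fun x => (hasDerivAt_cayley hl x).continuousAt

lemma conj_sub_ofReal_mul_sub_ofReal (l : ℂ) (x : ℝ) :
    (conj l - x) * (l - x) = ((x - l.re) ^ 2 + l.im ^ 2 : ℝ) := by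
  rw [conj_sub_ofReal_eq, mul_comm, mul_conj, normSq_apply]
  simp only [sub_re, sub_im, ofReal_re, ofReal_im, sub_zero]
  congr 1
  ring

lemma ofReal_cauchyPDFReal (l : ℂ) (x : ℝ) :
    (cauchyPDFReal l.re (Real.nnabs l.im) x : ℂ) =
      (|l.im| / Real.pi : ℝ) / ((conj l - x) * (l - x)) := by
  rw [conj_sub_ofReal_mul_sub_ofReal, cauchyPDFReal_def, Real.coe_nnabs, sq_abs]
  push_cast
  ring

lemma hasDerivAt_cayley_zpow_div (hl : l.im ≠ 0) {k : ℤ} (hk : k ≠ 0) (x : ℝ) :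
    HasDerivAt (fun y => cayley l y ^ k / (k * (l - conj l)))
      (cayley l x ^ k / ((conj l - x) * (l - x))) x := by
  have hw := cayley_ne_zero hl x
  have h := ((hasDerivAt_zpow k _ (Or.inl hw)).comp x (hasDerivAt_cayley hl x)).div_const
    (k * (l - conj l))
  refine h.congr_deriv ?_
  have hlc : l - conj l ≠ 0 := by simp [sub_conj, hl]
  have := conj_sub_ofReal_ne_zero hl x
  have := sub_ofReal_ne_zero hl x
  have hk' : (k : ℂ) ≠ 0 := by exact_mod_cast hk
  rw [zpow_sub_one₀ hw, cayley]
  field_simp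

lemma integrable_cayley_zpow_mul_cauchyPDFReal (hl : l.im ≠ 0) (k : ℤ) :
    Integrable fun x => cayley l x ^ k * (cauchyPDFReal l.re (Real.nnabs l.im) x : ℂ) :=
  (integrable_cauchyPDFReal _).ofReal.bdd_mul (c := 1)
    ((continuous_cayley hl).zpow₀ k fun x => Or.inl (cayley_ne_zero hl x)).aestronglyMeasurable
    (ae_of_all _ fun x => by rw [norm_zpow, norm_cayley hl, one_zpow])

lemma integral_cayley_zpow_mul_cauchyPDFReal (hl : l.im ≠ 0) (k : ℤ) :
    ∫ x, cayley l x ^ k * (cauchyPDFReal l.re (Real.nnabs l.im) x : ℂ) =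
      if k = 0 then 1 else 0 := by
  split_ifs with hk
  · have hscale : Real.nnabs l.im ≠ 0 := by simpa using hl
    simp only [hk, zpow_zero, one_mul]
    rw [integral_complex_ofReal, integral_cauchyPDFReal_eq_one _ hscale, ofReal_one]
  · set c : ℂ := ((|l.im| / Real.pi : ℝ) : ℂ)
    set F : ℝ → ℂ := fun y => c * (cayley l y ^ k / (k * (l - conj l)))
    have hF (x : ℝ) :
        HasDerivAt F (cayley l x ^ k * (cauchyPDFReal l.re (Real.nnabs l.im) x : ℂ)) x :=
      ((hasDerivAt_cayley_zpow_div hl hk x).const_mul c).congr_deriv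
        (by rw [ofReal_cauchyPDFReal]; ring)
    have hlim : Tendsto F (cobounded ℝ) (𝓝 (c * (1 / (k * (l - conj l))))) := by
      have := ((tendsto_cayley_cobounded hl).zpow₀ k (Or.inl one_ne_zero)).div_const
        (k * (l - conj l)) |>.const_mul c
      rwa [one_zpow] at this
    rw [integral_of_hasDerivAt_of_tendsto hF (integrable_cayley_zpow_mul_cauchyPDFReal hl k)
      (hlim.mono_left IsOrderBornology.atBot_le_cobounded)
      (hlim.mono_left IsOrderBornology.atTop_le_cobounded), sub_self]

lemma mul_conj_eq_cayley_zpow_mul_cauchyPDFReal {ω δ : ℝ} {γ : ℤ → ℂ} {H : ℝ → ℝ} {x : ℝ}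
    (hx : exp (I * H x) = cayley l x) {φ : ℤ → ℝ → ℂ}
    (hφ : ∀ n, φ n x = γ n * (√(|l.im| / Real.pi) : ℝ) *
      exp (I * ω * x) * exp (I * ((n : ℂ) + δ) * H x) / (conj l - x)) (m n : ℤ) :
    φ m x * conj (φ n x) =
      γ m * conj (γ n) *
        (cayley l x ^ (m - n) * (cauchyPDFReal l.re (Real.nnabs l.im) x : ℂ)) := by
  set s : ℂ := ((√(|l.im| / Real.pi) : ℝ) : ℂ)
  have hexp (z w : ℂ) : exp z * conj (exp w) = exp (z + conj w) := by rw [← exp_conj, exp_add]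
  have hs : s * conj s = (|l.im| / Real.pi : ℝ) := by
    rw [conj_ofReal, ← ofReal_mul, Real.mul_self_sqrt (by positivity)]
  have hω : exp (I * ω * x) * conj (exp (I * ω * x)) = 1 := by
    rw [hexp]
    simp
  have hH : exp (I * ((m : ℂ) + δ) * H x) * conj (exp (I * ((n : ℂ) + δ) * H x)) =
      cayley l x ^ (m - n) := by
    rw [hexp, ← hx, ← exp_int_mul]
    congr 1
    simp only [map_mul, map_add, conj_I, conj_ofReal, map_intCast]
    push_cast
    ring
  calc φ m x * conj (φ n x)
      = γ m * conj (γ n) * (s * conj s) *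
          (exp (I * ω * x) * conj (exp (I * ω * x))) *
          (exp (I * ((m : ℂ) + δ) * H x) * conj (exp (I * ((n : ℂ) + δ) * H x))) /
          ((conj l - x) * conj (conj l - x)) := by
        rw [hφ, hφ, map_div₀, div_mul_div_comm]
        simp only [map_mul]
        ring
    _ = _ := by
        rw [hs, hω, hH, ofReal_cauchyPDFReal, conj_sub_ofReal_eq, conj_conj,
          ← conj_sub_ofReal_eq]
        ring

end

theorem generalMT_orthonormal_general (l : ℂ) (him : l.im ≠ 0) (ω δ : ℝ)
    (γ : ℤ → ℂ) (hγ : ∀ n, ‖γ n‖ = 1)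
    (H : ℝ → ℝ)
    (hHarg : ∀ x : ℝ, Complex.exp (I * H x) = (l - x) / ((starRingEnd ℂ) l - x))
    (φ : ℤ → ℝ → ℂ)
    (hφ : ∀ n x, φ n x = γ n * (Real.sqrt (|l.im| / Real.pi) : ℂ) *
      Complex.exp (I * ω * x) * Complex.exp (I * ((n : ℂ) + δ) * H x) /
        ((starRingEnd ℂ) l - x)) :
    ∀ m n : ℤ, ∫ x : ℝ, φ m x * (starRingEnd ℂ) (φ n x) = if m = n then 1 else 0 := by
  intro m n
  simp only [fun x => mul_conj_eq_cayley_zpow_mul_cauchyPDFReal (hHarg x) (hφ · x) m n,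
    integral_const_mul, integral_cayley_zpow_mul_cauchyPDFReal him, sub_eq_zero]
  split_ifs with hmn
  · rw [hmn, mul_conj, normSq_eq_norm_sq, hγ, mul_one]
    norm_num
  · rw [mul_zero]

theorem generalMT_orthonormal (l : ℂ) (him : l.im ≠ 0) (ω δ : ℝ)
    (γ : ℤ → ℂ) (hγ : ∀ n, ‖γ n‖ = 1)
    (H : ℝ → ℝ) (hH : Continuous H)
    (hHarg : ∀ x : ℝ, Complex.exp (I * H x) = (l - x) / ((starRingEnd ℂ) l - x))
    (φ : ℤ → ℝ → ℂ)
    (hφ : ∀ n x, φ n x = γ n * (Real.sqrt (|l.im| / Real.pi) : ℂ) *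
      Complex.exp (I * ω * x) * Complex.exp (I * ((n : ℂ) + δ) * H x) /
        ((starRingEnd ℂ) l - x)) :
    ∀ m n : ℤ, ∫ x : ℝ, φ m x * (starRingEnd ℂ) (φ n x) = if m = n then 1 else 0 :=
  generalMT_orthonormal_general l him ω δ γ hγ H hHarg φ hφ
end

section
/- In the case γ_n = (−i)^n, λ = i/2 and ω = 0, the generalized Malmquist–Takenaka functions φ_n(x) = (−i)^n·√(1/(2π))·(i/2−x)^{n+δ}/(−i/2−x)^{n+δ+1} (for a fixed δ ∈ ℝ, complex powers via e^{i(n+δ)H(x)} with H(x) = 2·arctan(2x) times the appropriate modulus factors) satisfy the differentiation relation φ_n'(x) = −(n+δ)·φ_{n−1}(x) + (2(n+δ)+1)·i·φ_n(x) + (n+δ+1)·φ_{n+1}(x) for all n ∈ ℤ. -/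
open Complex

/-- Generalized Malmquist–Takenaka functions with parameter `δ`, for `λ = i/2`, `ω = 0`,
`γ_n = (-i)^n`, written via `H(x) = 2 arctan(2x)`. -/
noncomputable def genMT (δ : ℝ) (n : ℤ) (x : ℝ) : ℂ :=
  (Real.sqrt (2 / Real.pi) : ℂ) * I ^ n *
    Complex.exp (I * ((n : ℂ) + δ) * (2 * Real.arctan (2 * x))) / (1 - 2 * I * x)

/-! Write `w = 1 - 2ix`, so `w̄ = 1 + 2ix = 2 - w`. Since `e^{iH(x)} = w̄ / w`, raising `n` by one
multiplies `φ_n(x)` by `i w̄ / w`, while the logarithmic derivative of `φ_n` is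
`i (n + δ) H'(x) + 2i / w` with `H'(x) = 4 / (w w̄)`. Dividing the claimed identity by `i φ_n / (w w̄)`
leaves `N w² + (2N + 1) w w̄ + (N + 1) w̄² = 4N + 2w̄` for `N = n + δ`, which is `(w + w̄)² = 4`. -/

lemma Complex.exp_two_mul_arctan_mul_I {z : ℂ} (h₁ : 1 + z * I ≠ 0) (h₂ : 1 - z * I ≠ 0) :
    exp (2 * arctan z * I) = (1 + z * I) / (1 - z * I) := by
  rw [arctan, show 2 * (-I / 2 * log ((1 + z * I) / (1 - z * I))) * I
      = log ((1 + z * I) / (1 - z * I)) by ring_nf; simp, exp_log (div_ne_zero h₁ h₂)]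

lemma one_add_two_mul_I_mul_ofReal_ne_zero (x : ℝ) : 1 + 2 * I * x ≠ 0 := by
  intro h; simpa using congrArg re h

lemma one_sub_two_mul_I_mul_ofReal_ne_zero (x : ℝ) : 1 - 2 * I * x ≠ 0 := by
  intro h; simpa using congrArg re h

lemma exp_two_mul_arctan_two_mul_mul_I (x : ℝ) :
    exp (2 * (Real.arctan (2 * x) : ℂ) * I) = (1 + 2 * I * x) / (1 - 2 * I * x) := by
  have hz : ((2 * x : ℝ) : ℂ) * I = 2 * I * x := by push_cast; ring
  rw [ofReal_arctan, exp_two_mul_arctan_mul_I, hz]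
  · rw [hz]; exact one_add_two_mul_I_mul_ofReal_ne_zero x
  · rw [hz]; exact one_sub_two_mul_I_mul_ofReal_ne_zero x

lemma hasDerivAt_two_mul_arctan_two_mul (x : ℝ) :
    HasDerivAt (fun y : ℝ ↦ 2 * Real.arctan (2 * y)) (4 / (1 + (2 * x) ^ 2)) x :=
  (((hasDerivAt_id' x).const_mul 2).arctan.const_mul 2).congr_deriv (by ring)

lemma genMT_add_one (δ : ℝ) (n : ℤ) (x : ℝ) :
    genMT δ (n + 1) x = I * ((1 + 2 * I * x) / (1 - 2 * I * x)) * genMT δ n x := by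
  have hshift (A : ℂ) : exp (I * ((n : ℂ) + 1 + δ) * (2 * A)) =
      exp (I * ((n : ℂ) + δ) * (2 * A)) * exp (2 * A * I) := by
    rw [← exp_add]; ring_nf
  simp only [genMT, zpow_add₀ I_ne_zero, zpow_one, Int.cast_add, Int.cast_one, hshift,
    exp_two_mul_arctan_two_mul_mul_I]
  ring

lemma genMT_sub_one (δ : ℝ) (n : ℤ) (x : ℝ) :
    genMT δ (n - 1) x = -I * ((1 - 2 * I * x) / (1 + 2 * I * x)) * genMT δ n x := by
  have h₁ := one_add_two_mul_I_mul_ofReal_ne_zero x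
  have h₂ := one_sub_two_mul_I_mul_ofReal_ne_zero x
  conv_rhs => rw [← sub_add_cancel n 1, genMT_add_one]
  -- `field_simp` would rewrite `2 * I * x` to `I * 2 * x` and lose track of `h₁`, `h₂`
  generalize 1 + 2 * I * x = a at *
  generalize 1 - 2 * I * x = b at *
  field_simp
  rw [I_sq]
  ring

lemma hasDerivAt_genMT (δ : ℝ) (n : ℤ) (x : ℝ) :
    HasDerivAt (genMT δ n)
      (genMT δ n x * (I * ((n : ℂ) + δ) * (4 / (1 + (2 * x) ^ 2)) + 2 * I / (1 - 2 * I * x))) x := by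
  have hE := ((hasDerivAt_two_mul_arctan_two_mul x).ofReal_comp.const_mul
    (I * ((n : ℂ) + δ))).cexp.const_mul ((Real.sqrt (2 / Real.pi) : ℂ) * I ^ n)
  have hw : HasDerivAt (fun y : ℝ ↦ (1 : ℂ) - 2 * I * y) (-(2 * I)) x := by
    simpa using ((hasDerivAt_id x).ofReal_comp.const_mul (2 * I)).const_sub 1
  have hw₀ := one_sub_two_mul_I_mul_ofReal_ne_zero x
  refine (hE.div hw hw₀).congr_deriv ?_ |>.congr_of_eventuallyEq ?_
  · unfold genMT
    push_cast
    generalize 1 - 2 * I * x = w at *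
    field_simp
    ring
  · exact .of_eq (funext fun y ↦ by simp [genMT])

theorem genMT_hasDerivAt (δ : ℝ) (n : ℤ) (x : ℝ) :
    HasDerivAt (genMT δ n)
      (-((n : ℂ) + δ) * genMT δ (n - 1) x +
        (2 * ((n : ℂ) + δ) + 1) * I * genMT δ n x +
        ((n : ℂ) + δ + 1) * genMT δ (n + 1) x) x := by
  convert hasDerivAt_genMT δ n x using 1
  have h₁ := one_add_two_mul_I_mul_ofReal_ne_zero x
  have h₂ := one_sub_two_mul_I_mul_ofReal_ne_zero x
  have h₃ : (1 : ℂ) + (2 * x) ^ 2 = (1 + 2 * I * x) * (1 - 2 * I * x) := by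
    linear_combination (4 * (x : ℂ) ^ 2) * I_sq
  have hsum : 1 + 2 * I * x = 2 - (1 - 2 * I * (x : ℂ)) := by ring
  rw [genMT_sub_one, genMT_add_one, h₃, hsum]
  rw [hsum] at h₁
  generalize 1 - 2 * I * x = w at *
  field_simp
  ring
end
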